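/- arXiv:2402.10441 — 2 statements merged into one kernel-verified Lean document; each statement's English description precedes it below -/
import Mathlib

section
/- Let h : ℕ → ℝ and α : ℕ → ℝ, fix k ≥ 1 with α k ∈ (0,1), and suppose the non-strict discrete-time barrier constraint h k - h (k-1) + (α k) * h (k-1) ≥ 0 holds at step k. Define the Lyapunov values V j := (max (-(h j)) 0)². Then V k ≤ (1 - α k)² * V (k-1); equivalently V k - V (k-1) ≤ -c_k * V (k-1) where c_k := 1 - (1 - α k)² ∈ (0,1). (One-step Lyapunov decrease from the proof of Theorem 2.) -/
/-! The constraint says `h k ≥ (1 - α k) * h (k-1)`. The unsafe part `x ↦ max (-x) 0` is antitone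
and positively homogeneous, and `1 - α k ≥ 0`, so the unsafe part shrinks by the factor `1 - α k`;
squaring gives the Lyapunov decrease. -/

section

variable {R : Type*} [Field R] [LinearOrder R] [IsStrictOrderedRing R]

theorem max_neg_zero_le_mul_of_mul_le {a b c : R} (hc : 0 ≤ c) (hab : c * a ≤ b) :
    max (-b) 0 ≤ c * max (-a) 0 := by
  refine max_le ?_ (mul_nonneg hc (le_max_right _ _))
  calc -b ≤ c * -a := by linarith [mul_neg c a]
    _ ≤ c * max (-a) 0 := mul_le_mul_of_nonneg_left (le_max_left _ _) hc

theorem max_neg_zero_sq_le_of_mul_le {a b c : R} (hc : 0 ≤ c) (hab : c * a ≤ b) :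
    max (-b) 0 ^ 2 ≤ c ^ 2 * max (-a) 0 ^ 2 := by
  rw [← mul_pow]
  exact pow_le_pow_left₀ (le_max_right _ _) (max_neg_zero_le_mul_of_mul_le hc hab) 2

theorem one_sub_one_sub_sq_mem_Ioo {α : R} (hα : α ∈ Set.Ioo 0 1) :
    1 - (1 - α) ^ 2 ∈ Set.Ioo 0 1 := by
  obtain ⟨hα0, hα1⟩ := hα
  constructor <;> nlinarith

end

theorem barrier_lyapunov_one_step_decrease_general
    (h α : ℕ → ℝ) (k : ℕ)
    (hαk : α k ∈ Set.Ioo (0 : ℝ) 1)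
    (hbar : h k - h (k - 1) + α k * h (k - 1) ≥ 0) :
    (max (-(h k)) 0) ^ 2 ≤ (1 - α k) ^ 2 * (max (-(h (k - 1))) 0) ^ 2 ∧
    (max (-(h k)) 0) ^ 2 - (max (-(h (k - 1))) 0) ^ 2
        ≤ -(1 - (1 - α k) ^ 2) * (max (-(h (k - 1))) 0) ^ 2 ∧
    (1 - (1 - α k) ^ 2) ∈ Set.Ioo (0 : ℝ) 1 := by
  have hdecrease := max_neg_zero_sq_le_of_mul_le (a := h (k - 1)) (b := h k)
    (sub_nonneg.mpr hαk.2.le) (by linarith)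
  exact ⟨hdecrease, by linarith, one_sub_one_sub_sq_mem_Ioo hαk⟩

/-- One-step Lyapunov decrease from the proof of Theorem 2, with
`V j = (max (-(h j)) 0)²` and `c_k = 1 - (1 - α k)² ∈ (0,1)`. -/
theorem barrier_lyapunov_one_step_decrease
    (h α : ℕ → ℝ) (k : ℕ) (hk : 1 ≤ k)
    (hαk : α k ∈ Set.Ioo (0 : ℝ) 1)
    (hbar : h k - h (k - 1) + α k * h (k - 1) ≥ 0) :
    (max (-(h k)) 0) ^ 2 ≤ (1 - α k) ^ 2 * (max (-(h (k - 1))) 0) ^ 2 ∧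
    (max (-(h k)) 0) ^ 2 - (max (-(h (k - 1))) 0) ^ 2
        ≤ -(1 - (1 - α k) ^ 2) * (max (-(h (k - 1))) 0) ^ 2 ∧
    (1 - (1 - α k) ^ 2) ∈ Set.Ioo (0 : ℝ) 1 :=
  barrier_lyapunov_one_step_decrease_general h α k hαk hbar
end

section
/- Let h : ℕ → ℝ and α : ℕ → ℝ with α k ∈ (0,1) for all k ≥ 1. If the non-strict discrete-time barrier constraint h k - h (k-1) + (α k) * h (k-1) ≥ 0 holds for every k ≥ 1, then for every k ∈ ℕ one has the robust lower bound h k ≥ -(max (-(h 0)) 0) * ∏_{i=1}^{k} (1 - α i), valid regardless of whether the initial barrier value h 0 is safe or unsafe. -/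
/-!
The constraint says `h k ≥ (1 - α k) h (k-1)` with a nonnegative factor, so `h k` dominates
`h 0 * ∏ (1 - α i)`; replacing `h 0` by the smaller `-(max (-(h 0)) 0)` keeps the bound since the
product is nonnegative.
-/

open Finset

theorem mul_prod_Icc_le_of_mul_le_succ {R : Type*} [CommSemiring R] [PartialOrder R]
    [IsOrderedRing R] {u c : ℕ → R} (hc : ∀ k, 0 ≤ c (k + 1))
    (hu : ∀ k, c (k + 1) * u k ≤ u (k + 1)) (n : ℕ) :
    u 0 * ∏ i ∈ Icc 1 n, c i ≤ u n := by
  induction n with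
  | zero => simp
  | succ n ih =>
    calc u 0 * ∏ i ∈ Icc 1 (n + 1), c i
        = c (n + 1) * (u 0 * ∏ i ∈ Icc 1 n, c i) := by
          rw [prod_Icc_succ_top (Nat.le_add_left 1 n)]; ring
      _ ≤ c (n + 1) * u n := mul_le_mul_of_nonneg_left ih (hc n)
      _ ≤ u (n + 1) := hu n

/-- Robust lower bound on the barrier value, valid whether or not the initial
barrier value is safe: `h k ≥ -(max (-(h 0)) 0) * ∏_{i=1}^{k} (1 - α i)`. -/
theorem barrier_robust_lower_bound
    (h α : ℕ → ℝ)
    (hα : ∀ k, 1 ≤ k → α k ∈ Set.Ioo (0 : ℝ) 1)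
    (hbar : ∀ k, 1 ≤ k → h k - h (k - 1) + α k * h (k - 1) ≥ 0) :
    ∀ k, h k ≥ -(max (-(h 0)) 0) * ∏ i ∈ Finset.Icc 1 k, (1 - α i) := by
  intro k
  have hc : ∀ i, 1 ≤ i → 0 ≤ 1 - α i := fun i hi => sub_nonneg.mpr (hα i hi).2.le
  have hstep : ∀ n, (1 - α (n + 1)) * h n ≤ h (n + 1) := fun n => by
    have := hbar (n + 1) (Nat.le_add_left 1 n)
    rw [Nat.add_sub_cancel] at this
    linarith
  have hinit : -(max (-(h 0)) 0) ≤ h 0 := neg_le.mpr (le_max_left _ _)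
  calc -(max (-(h 0)) 0) * ∏ i ∈ Icc 1 k, (1 - α i)
      ≤ h 0 * ∏ i ∈ Icc 1 k, (1 - α i) :=
        mul_le_mul_of_nonneg_right hinit (prod_nonneg fun i hi => hc i (mem_Icc.mp hi).1)
    _ ≤ h k := mul_prod_Icc_le_of_mul_le_succ (fun n => hc (n + 1) (Nat.le_add_left 1 n)) hstep k
end
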